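/- arXiv:1512.08779 — 3 statements merged into one kernel-verified Lean document; each statement's English description precedes it below -/
import Mathlib

section
/- Let H, H' ≥ 2 be integers and let ν₁, μ₁ be integers with 2 − H' ≤ ν₁ − μ₁ ≤ H − 2. Then ∑_{a=0}^{H'−2} (−1)^a q^{a(a+1)/2} q^{(H+a)ν₁+(H'−a−1)μ₁} / ((q)_{H+a−1}(q)_{H'−a−2}) = ∑_{b=0}^{H−2} (−1)^b q^{b(b+1)/2} q^{(H−b−1)ν₁+(H'+b)μ₁} / ((q)_{H−b−2}(q)_{H'+b−1}) holds as an identity of rational functions in q. -/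
open scoped Classical

noncomputable section

/-- The finite q-Pochhammer `(q)_k = ∏_{s=1}^k (1 - q^s)` as a rational function in `q`. -/
def poch (k : ℕ) : RatFunc ℚ := ∏ s ∈ Finset.Icc 1 k, (1 - RatFunc.X ^ s)

/-!
With `N = H + H' - 3` and `t = ν₁ - μ₁ + 2 - H`, the summands on the left are, up to one
common factor `±q^c`, the terms `k = H - 1 + a` of
  `∑_{k=0}^{N} (-1)^k q^{binom(k,2) + k t} / ((q)_k (q)_{N-k})`,
and those on the right are minus its terms `k = H - 2 - b`; together they exhaust `0 ≤ k ≤ N`.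
By the q-binomial theorem this sum is `∏_{i<N} (1 - q^{t+i}) / (q)_N`, and the hypothesis on
`ν₁ - μ₁` says exactly `1 - N ≤ t ≤ 0`, so the factor `i = -t` vanishes.
-/

open Finset

section QBinomial

variable {R : Type*} [CommRing R] (q : R)

def qBinom : ℕ → ℕ → R
  | _, 0 => 1
  | 0, _ + 1 => 0
  | n + 1, k + 1 => qBinom n k + q ^ (k + 1) * qBinom n (k + 1)

def qPoch (k : ℕ) : R := ∏ s ∈ Icc 1 k, (1 - q ^ s)

variable {q}

@[simp] theorem qBinom_zero_right (n : ℕ) : qBinom q n 0 = 1 := by cases n <;> rfl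

theorem qBinom_succ_succ (n k : ℕ) :
    qBinom q (n + 1) (k + 1) = qBinom q n k + q ^ (k + 1) * qBinom q n (k + 1) := rfl

theorem qBinom_eq_zero_of_lt {n k : ℕ} (h : n < k) : qBinom q n k = 0 := by
  induction n generalizing k with
  | zero => obtain ⟨k, rfl⟩ := Nat.exists_eq_add_one_of_ne_zero h.ne'; rfl
  | succ n ih =>
    obtain ⟨k, rfl⟩ := Nat.exists_eq_add_one_of_ne_zero (Nat.ne_zero_of_lt h)
    rw [qBinom_succ_succ, ih (by omega), ih (by omega), mul_zero, add_zero]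

@[simp] theorem qPoch_zero : qPoch q 0 = 1 := by simp [qPoch]

theorem qPoch_succ (k : ℕ) : qPoch q (k + 1) = qPoch q k * (1 - q ^ (k + 1)) :=
  prod_Icc_succ_top (by omega) _

theorem qBinom_mul_qPoch {n k : ℕ} (hk : k ≤ n) :
    qBinom q n k * (qPoch q k * qPoch q (n - k)) = qPoch q n := by
  induction n generalizing k with
  | zero => simp [Nat.le_zero.1 hk]
  | succ n ih =>
    rcases k with _ | k
    · simp
    obtain ⟨m, rfl⟩ := Nat.exists_eq_add_of_le (Nat.le_of_succ_le_succ hk)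
    rcases m with _ | m
    · have hn := ih (k := k) le_rfl
      simp only [add_zero, Nat.sub_self, qPoch_zero, mul_one] at hn ⊢
      rw [qBinom_succ_succ, qBinom_eq_zero_of_lt (lt_add_one k), qPoch_succ]
      linear_combination (1 - q ^ (k + 1)) * hn
    · have ihk := ih (k := k) (by omega)
      have ihk1 := ih (k := k + 1) (by omega)
      rw [show k + (m + 1) - k = m + 1 by omega, qPoch_succ m] at ihk
      rw [show k + (m + 1) - (k + 1) = m by omega, qPoch_succ k] at ihk1
      rw [show k + (m + 1) + 1 - (k + 1) = m + 1 by omega, qBinom_succ_succ,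
        qPoch_succ (k + (m + 1)), qPoch_succ k, qPoch_succ m]
      linear_combination (1 - q ^ (k + 1)) * ihk + q ^ (k + 1) * (1 - q ^ (m + 1)) * ihk1

theorem qBinom_sum_eq_prod (N : ℕ) (z : R) :
    ∑ k ∈ range (N + 1), (-1) ^ k * q ^ k.choose 2 * z ^ k * qBinom q N k =
      ∏ i ∈ range N, (1 - z * q ^ i) := by
  induction N generalizing z with
  | zero => simp
  | succ N ih =>
    set h : ℕ → R := fun k ↦ (-1) ^ k * q ^ k.choose 2 * (z * q) ^ k * qBinom q N k
    have hstep (k : ℕ) : (-1) ^ (k + 1) * q ^ (k + 1).choose 2 * z ^ (k + 1) *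
        qBinom q (N + 1) (k + 1) = -z * h k + h (k + 1) := by
      simp only [h, qBinom_succ_succ, Nat.choose_succ_succ, Nat.choose_one_right]
      ring
    have hshift : ∑ k ∈ range (N + 1), h (k + 1) + h 0 = ∑ k ∈ range (N + 1), h k := by
      rw [← sum_range_succ', sum_range_succ, add_eq_left]
      simp only [h, qBinom_eq_zero_of_lt (lt_add_one N), mul_zero]
    have hprod :
        ∏ i ∈ range N, (1 - z * q ^ (i + 1)) = ∏ i ∈ range N, (1 - z * q * q ^ i) :=
      prod_congr rfl fun i _ ↦ by ring
    rw [sum_range_succ', sum_congr rfl fun k _ ↦ hstep k, sum_add_distrib, ← mul_sum,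
      prod_range_succ', hprod, ← ih]
    simp only [h, qBinom_zero_right] at hshift ⊢
    linear_combination hshift

theorem qBinom_sum_eq_zero {N j : ℕ} {z : R} (hz : z * q ^ j = 1) (hj : j < N) :
    ∑ k ∈ range (N + 1), (-1) ^ k * q ^ k.choose 2 * z ^ k * qBinom q N k = 0 := by
  rw [qBinom_sum_eq_prod]
  exact prod_eq_zero (mem_range.2 hj) (by rw [hz, sub_self])

end QBinomial

open RatFunc

theorem RatFunc.one_sub_X_pow_ne_zero {K : Type*} [Field K] {s : ℕ} (hs : s ≠ 0) :
    (1 - X ^ s : RatFunc K) ≠ 0 := by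
  have : (1 - Polynomial.X ^ s : Polynomial K) ≠ 0 := fun h ↦ by
    simpa [hs] using congrArg (Polynomial.eval 0) h
  simpa [← algebraMap_X] using (map_ne_zero_iff _ (algebraMap_injective K)).2 this

theorem poch_ne_zero (k : ℕ) : poch k ≠ 0 :=
  prod_ne_zero_iff.2 fun s hs ↦ one_sub_X_pow_ne_zero (by simp at hs; omega)

def vertexTerm (N : ℕ) (t : ℤ) (k : ℕ) : RatFunc ℚ :=
  (-1) ^ k * X ^ ((k.choose 2 : ℤ) + k * t) / (poch k * poch (N - k))

theorem poch_eq_qPoch : poch = qPoch X := rfl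

theorem vertexTerm_eq_qBinom_div {N k : ℕ} (hk : k ≤ N) (t : ℤ) :
    vertexTerm N t k = (-1) ^ k * X ^ k.choose 2 * (X ^ t) ^ k * qBinom X N k / poch N := by
  have hpoch : qBinom X N k * (poch k * poch (N - k)) = poch N := by
    simpa only [poch_eq_qPoch] using qBinom_mul_qPoch hk
  rw [vertexTerm, zpow_add₀ X_ne_zero, zpow_natCast, mul_comm (k : ℤ) t, zpow_mul, zpow_natCast,
    ← hpoch]
  have : qBinom X N k ≠ 0 := left_ne_zero_of_mul (hpoch ▸ poch_ne_zero N)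
  field_simp [poch_ne_zero]

theorem sum_vertexTerm_eq_zero {N : ℕ} {t : ℤ} (h1 : 1 - N ≤ t) (h2 : t ≤ 0) :
    ∑ k ∈ range (N + 1), vertexTerm N t k = 0 := by
  have hz : X ^ t * X ^ (-t).toNat = (1 : RatFunc ℚ) := by
    rw [← zpow_natCast, ← zpow_add₀ X_ne_zero, Int.toNat_of_nonneg (by omega), add_neg_cancel,
      zpow_zero]
  rw [sum_congr rfl fun k hk ↦ vertexTerm_eq_qBinom_div (Nat.lt_succ_iff.1 (mem_range.1 hk)) t,
    ← sum_div, qBinom_sum_eq_zero hz (by omega), zero_div]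

theorem Int.natCast_mul_succ_ediv_two (n : ℕ) :
    (n : ℤ) * (n + 1) / 2 = ((n + 1).choose 2 : ℕ) := by
  rw [Nat.choose_two_right, Nat.add_sub_cancel, Int.natCast_div]
  push_cast
  ring_nf

theorem lhs_summand_eq {H H' a : ℕ} (hH : 1 ≤ H) (ha : a + 2 ≤ H') (ν μ : ℤ) :
    (-1 : RatFunc ℚ) ^ a *
        X ^ ((a : ℤ) * ((a : ℤ) + 1) / 2 + ((H : ℤ) + a) * ν + ((H' : ℤ) - a - 1) * μ) /
        (poch (H + a - 1) * poch (H' - a - 2)) =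
      (-1) ^ (H - 1) * X ^ (ν + ((H : ℤ) + H' - 2) * μ + ((H - 1).choose 2 : ℕ)) *
        vertexTerm (H + H' - 3) (ν - μ + 2 - H) (H - 1 + a) := by
  have hsign : (-1 : RatFunc ℚ) ^ a = (-1) ^ (H - 1) * (-1) ^ (H - 1 + a) := by
    rw [← pow_add, ← add_assoc, ← two_mul, pow_add, pow_mul, neg_one_sq, one_pow, one_mul]
  have hexp : (a : ℤ) * ((a : ℤ) + 1) / 2 + ((H : ℤ) + a) * ν + ((H' : ℤ) - a - 1) * μ =
      (ν + ((H : ℤ) + H' - 2) * μ + ((H - 1).choose 2 : ℕ)) +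
        (((H - 1 + a).choose 2 : ℕ) + ((H - 1 + a : ℕ) : ℤ) * (ν - μ + 2 - H)) := by
    rw [Int.natCast_mul_succ_ediv_two]
    apply Int.cast_injective (α := ℚ)
    push_cast [Nat.cast_choose_two, Nat.cast_sub hH]
    ring
  rw [hsign, hexp, zpow_add₀ X_ne_zero, vertexTerm, show H + a - 1 = H - 1 + a by omega,
    show H' - a - 2 = H + H' - 3 - (H - 1 + a) by omega]
  ring

theorem rhs_summand_eq {H H' b : ℕ} (hb : b + 2 ≤ H) (ν μ : ℤ) :
    (-1 : RatFunc ℚ) ^ b *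
        X ^ ((b : ℤ) * ((b : ℤ) + 1) / 2 + ((H : ℤ) - b - 1) * ν + ((H' : ℤ) + b) * μ) /
        (poch (H - b - 2) * poch (H' + b - 1)) =
      -((-1) ^ (H - 1) * X ^ (ν + ((H : ℤ) + H' - 2) * μ + ((H - 1).choose 2 : ℕ)) *
        vertexTerm (H + H' - 3) (ν - μ + 2 - H) (H - 2 - b)) := by
  have hsign : (-1 : RatFunc ℚ) ^ b = -((-1) ^ (H - 1) * (-1) ^ (H - 2 - b)) := by
    rw [← pow_add, show H - 1 + (H - 2 - b) = 2 * (H - 2 - b) + b + 1 by omega, pow_succ,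
      pow_add, pow_mul, neg_one_sq, one_pow, one_mul, mul_neg_one, neg_neg]
  have hexp : (b : ℤ) * ((b : ℤ) + 1) / 2 + ((H : ℤ) - b - 1) * ν + ((H' : ℤ) + b) * μ =
      (ν + ((H : ℤ) + H' - 2) * μ + ((H - 1).choose 2 : ℕ)) +
        (((H - 2 - b).choose 2 : ℕ) + ((H - 2 - b : ℕ) : ℤ) * (ν - μ + 2 - H)) := by
    rw [Int.natCast_mul_succ_ediv_two]
    apply Int.cast_injective (α := ℚ)
    push_cast [Nat.cast_choose_two, Nat.cast_sub (by omega : 1 ≤ H),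
      Nat.cast_sub (by omega : b ≤ H - 2), Nat.cast_sub (by omega : 2 ≤ H)]
    ring
  rw [hsign, hexp, zpow_add₀ X_ne_zero, vertexTerm, show H - b - 2 = H - 2 - b by omega,
    show H' + b - 1 = H + H' - 3 - (H - 2 - b) by omega]
  ring

/-- **Lemma (two Brion vertex sums agree).** For `n = m = 1` the expressions
`S^{(H,H')}_𝔬(q)` and `S^{(H,H')}_𝔬'(q)` coincide when `2 - H' ≤ ν₁ - μ₁ ≤ H - 2`. -/
theorem brion_sums_agree (H H' : ℕ) (hH : 2 ≤ H) (hH' : 2 ≤ H') (ν₁ μ₁ : ℤ)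
    (h1 : 2 - (H' : ℤ) ≤ ν₁ - μ₁) (h2 : ν₁ - μ₁ ≤ (H : ℤ) - 2) :
    (∑ a ∈ Finset.range (H' - 1),
        (-1 : RatFunc ℚ) ^ a *
          RatFunc.X ^ (((a : ℤ) * ((a : ℤ) + 1)) / 2 + ((H : ℤ) + a) * ν₁ +
            ((H' : ℤ) - a - 1) * μ₁) /
          (poch (H + a - 1) * poch (H' - a - 2))) =
      ∑ b ∈ Finset.range (H - 1),
        (-1 : RatFunc ℚ) ^ b *
          RatFunc.X ^ (((b : ℤ) * ((b : ℤ) + 1)) / 2 + ((H : ℤ) - b - 1) * ν₁ +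
            ((H' : ℤ) + b) * μ₁) /
          (poch (H - b - 2) * poch (H' + b - 1)) := by
  set T := vertexTerm (H + H' - 3) (ν₁ - μ₁ + 2 - H)
  have hvanish : ∑ k ∈ range (H - 1), T k + ∑ a ∈ range (H' - 1), T (H - 1 + a) = 0 := by
    rw [← sum_range_add, show H - 1 + (H' - 1) = H + H' - 3 + 1 by omega]
    exact sum_vertexTerm_eq_zero (by omega) (by omega)
  have hreflect : ∑ b ∈ range (H - 1), T (H - 2 - b) = ∑ k ∈ range (H - 1), T k := by
    simpa only [show H - 1 - 1 = H - 2 by omega] using sum_range_reflect T (H - 1)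
  rw [sum_congr rfl fun a ha ↦ lhs_summand_eq (by omega) (by simp at ha; omega) ν₁ μ₁,
    sum_congr rfl fun b hb ↦ rhs_summand_eq (H' := H') (by simp at hb; omega) ν₁ μ₁,
    sum_neg_distrib, ← mul_sum, ← mul_sum, hreflect]
  linear_combination (-1 : RatFunc ℚ) ^ (H - 1) *
    X ^ (ν₁ + ((H : ℤ) + H' - 2) * μ₁ + ((H - 1).choose 2 : ℕ)) * hvanish

end
end

section
/- Let n, m be nonnegative integers and λ a partition with λ_{n+1} ≤ m, and set r = min{t ≥ 0 : λ_{n−t} ≥ m−t} (so 0 ≤ r ≤ min(n,m)). Then: (a) for a positive integer j, λ'_j − j − (n−m) ≥ 0 if and only if 1 ≤ j ≤ m−r, where λ' is the conjugate partition; and (b) for a positive integer i, i − λ_i − (n−m) − 1 ≥ 0 if and only if i > n−r. -/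
open scoped Classical

noncomputable section

/-- The field of formal Laurent series over `ℚ`, where our variable `q` lives. -/
abbrev L : Type := LaurentSeries ℚ

/-- The variable `q`, as a Laurent series. -/
def q : L := HahnSeries.single 1 1

/-- The Euler product `(q)_∞ = ∏_{k=1}^∞ (1 - q^k)`, defined coefficientwise
(the coefficient of `q^d` is stable once the product is taken up to `k = d`). -/
def eulerPS : PowerSeries ℚ :=
  PowerSeries.mk fun d => PowerSeries.coeff d (∏ k ∈ Finset.Icc 1 d, (1 - PowerSeries.X ^ k))

/-- `(q)_∞` as a Laurent series. -/
def euler : L := HahnSeries.ofPowerSeries ℤ ℚ eulerPS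

/-- The series `∑_{a ≥ 0} (-1)^a q^{a(a+1)/2 + D a}` as a Laurent series
(its coefficients are computed by the finitely supported sums below). -/
def theta (D : ℤ) : L :=
  q ^ (-(D ^ 2)) *
    HahnSeries.ofPowerSeries ℤ ℚ (PowerSeries.mk fun d =>
      ∑' a : ℕ, if ((a : ℤ) * ((a : ℤ) + 1)) / 2 + D * a + D ^ 2 = (d : ℤ) then (-1 : ℚ) ^ a else 0)

/-- `f : ℕ → ℕ` encodes a partition `λ` (0-indexed: `f i = λ_{i+1}`): it is weakly
decreasing with finitely many nonzero parts. -/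
def IsPtn (f : ℕ → ℕ) : Prop := Antitone f ∧ ∃ N, ∀ i, N ≤ i → f i = 0

/-- `a : ℕ → ℕ → ℕ∞` (0-indexed: `a i j = a_{i+1,j+1}`) is a plane partition with a pit
at `(n+1, m+1)` and asymptotic conditions `(μ, ν, λ)`. -/
def IsPitPP (n m : ℕ) (μ ν lam : ℕ → ℕ) (a : ℕ → ℕ → ℕ∞) : Prop :=
  (∀ i j, a (i + 1) j ≤ a i j) ∧ (∀ i j, a i (j + 1) ≤ a i j) ∧
    a n m = 0 ∧
    (∀ i, ∃ J, ∀ j, J ≤ j → a i j = (ν i : ℕ∞)) ∧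
    (∀ j, ∃ I, ∀ i, I ≤ i → a i j = (μ j : ℕ∞)) ∧
    (∀ i j, a i j = ⊤ ↔ j < lam i)

/-- The weight `|a| = ∑_{i-n ≤ j-m, (i,j) ∉ λ} (a_{i,j} - ν_i)
+ ∑_{i-n > j-m, (i,j) ∉ λ} (a_{i,j} - μ_j)` of a plane partition. -/
def wt (n m : ℕ) (μ ν lam : ℕ → ℕ) (a : ℕ → ℕ → ℕ∞) : ℕ∞ :=
  ∑' p : ℕ × ℕ,
    if lam p.1 ≤ p.2 then
      (if p.1 + m ≤ p.2 + n then a p.1 p.2 - (ν p.1 : ℕ∞) else a p.1 p.2 - (μ p.2 : ℕ∞))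
    else 0

/-- The generating function `χ^{n,m}_{μ,ν,λ}(q) = ∑_a q^{|a|}` of plane partitions with a pit
at `(n+1, m+1)` and asymptotic conditions `(μ, ν, λ)`. -/
def chi (n m : ℕ) (μ ν lam : ℕ → ℕ) : L :=
  HahnSeries.ofPowerSeries ℤ ℚ (PowerSeries.mk fun d =>
    (Nat.card {a : ℕ → ℕ → ℕ∞ // IsPitPP n m μ ν lam a ∧ wt n m μ ν lam a = (d : ℕ∞)} : ℚ))

/-- `r = min {t ≥ 0 : λ_{n-t} ≥ m-t}` (with the convention `λ_0 = +∞`), the atypicality. -/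
def rAtyp (n m : ℕ) (lam : ℕ → ℕ) : ℕ := sInf {t | n ≤ t ∨ m ≤ t + lam (n - t - 1)}

lemma rAtyp_le_left (n m : ℕ) (lam : ℕ → ℕ) : rAtyp n m lam ≤ n :=
  Nat.sInf_le (Or.inl le_rfl)

lemma rAtyp_le_right (n m : ℕ) (lam : ℕ → ℕ) : rAtyp n m lam ≤ m :=
  Nat.sInf_le (Or.inr (Nat.le_add_right m _))

/-- The conjugate partition: `conj lam j = λ'_{j+1} = #{i : λ_i ≥ j+1}` (0-indexed). -/
def conj (lam : ℕ → ℕ) (j : ℕ) : ℕ := Nat.card {i : ℕ // j + 1 ≤ lam i}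

/-- `N_i = ν_i + n - i` (0-indexed `i : Fin n` stands for the math index `i+1`). -/
def Nc (n : ℕ) (ν : ℕ → ℕ) (i : Fin n) : ℤ := (ν i : ℤ) + n - ((i : ℕ) + 1)

/-- `M_j = μ_j + m - j`. -/
def Mc (m : ℕ) (μ : ℕ → ℕ) (j : Fin m) : ℤ := (μ j : ℤ) + m - ((j : ℕ) + 1)

/-- `P_i = π_i + (n-r) - i` where `π_i = λ_i - (m-r)`. -/
def Pc (n m r : ℕ) (lam : ℕ → ℕ) (i : Fin (n - r)) : ℤ :=
  ((lam i : ℤ) - ((m : ℤ) - r)) + ((n : ℤ) - r) - ((i : ℕ) + 1)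

/-- `Q_j = κ_j + (m-r) - j` where `κ_j = λ'_j - (n-r)`. -/
def Qc (n m r : ℕ) (lam : ℕ → ℕ) (j : Fin (m - r)) : ℤ :=
  ((conj lam j : ℤ) - ((n : ℤ) - r)) + ((m : ℤ) - r) - ((j : ℕ) + 1)

/-- `Δ^{m,n}_{μ,ν,λ} = ∑_{j=1}^{m-r} M_j Q_j + ∑_{i=1}^{n-r} N_i (P_i + 1)`. -/
def Δdet (n m : ℕ) (μ ν lam : ℕ → ℕ) : ℤ :=
  (∑ j : Fin (m - rAtyp n m lam),
      Mc m μ (Fin.castLE (Nat.sub_le m _) j) * Qc n m (rAtyp n m lam) lam j) +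
  (∑ i : Fin (n - rAtyp n m lam),
      Nc n ν (Fin.castLE (Nat.sub_le n _) i) * (Pc n m (rAtyp n m lam) lam i + 1))

/-- The block matrix of Theorem 1: upper-left `m × n` block
`∑_{a ≥ 0} (-1)^a q^{a(a+1)/2 + (N_j - M_i) a}`, upper-right `m × (m-r)` block `q^{-M_i Q_j}`,
lower-left `(n-r) × n` block `q^{-N_j (P_i + 1)}`, lower-right block `0`. -/
def pitMatrix (n m r : ℕ) (N : Fin n → ℤ) (M : Fin m → ℤ)
    (P : Fin (n - r) → ℤ) (Q : Fin (m - r) → ℤ) :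
    Matrix (Fin (m + (n - r))) (Fin (m + (n - r))) L := fun i j =>
  if hi : (i : ℕ) < m then
    if hj : (j : ℕ) < n then theta (N ⟨j, hj⟩ - M ⟨i, hi⟩)
    else if hj2 : (j : ℕ) - n < m - r then q ^ (-(M ⟨i, hi⟩ * Q ⟨(j : ℕ) - n, hj2⟩)) else 0
  else
    if hi2 : (i : ℕ) - m < n - r then
      if hj : (j : ℕ) < n then q ^ (-(N ⟨j, hj⟩ * (P ⟨(i : ℕ) - m, hi2⟩ + 1))) else 0
    else 0

/-- `a_E(x_1, …, x_k) = det (x_i^{E_j})`. -/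
def aDet {k : ℕ} (E : Fin k → ℤ) (x : Fin k → L) : L := Matrix.det fun i j => x i ^ E j

/-- The argument vector `(q^{A_1}, …, q^{A_r}, q^{-P_1-1}, …, q^{-P_{n-r}-1})`. -/
def xN (n r : ℕ) (P : Fin (n - r) → ℤ) (A : Fin r → ℕ) (i : Fin n) : L :=
  if h : (i : ℕ) < r then q ^ (A ⟨i, h⟩ : ℤ)
  else if h2 : (i : ℕ) - r < n - r then q ^ (-(P ⟨(i : ℕ) - r, h2⟩ + 1)) else 0

/-- The argument vector `(q^{-A_1}, …, q^{-A_r}, q^{-Q_1}, …, q^{-Q_{m-r}})`. -/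
def xM (m r : ℕ) (Q : Fin (m - r) → ℤ) (A : Fin r → ℕ) (j : Fin m) : L :=
  if h : (j : ℕ) < r then q ^ (-(A ⟨j, h⟩ : ℤ))
  else if h2 : (j : ℕ) - r < m - r then q ^ (-(Q ⟨(j : ℕ) - r, h2⟩)) else 0

/-- `L_i = λ_i - i + n - m + 1` (0-indexed `i` stands for `i+1`). -/
def Lz (n m : ℕ) (lam : ℕ → ℕ) (i : ℕ) : ℤ := (lam i : ℤ) - ((i : ℤ) + 1) + n - m + 1

/-- `Δ^{σ,τ,A}(μ,ν,λ)` of Theorem 2'. -/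
def Δboson (n m r : ℕ) (hrn : r ≤ n) (hrm : r ≤ m)
    (N : Fin n → ℤ) (M : Fin m → ℤ) (P : Fin (n - r) → ℤ) (Q : Fin (m - r) → ℤ)
    (σ : Equiv.Perm (Fin n)) (τ : Equiv.Perm (Fin m)) (A : Fin r → ℤ) : ℤ :=
  (∑ i : Fin r,
      (A i * (A i + 1) / 2 + A i * (N (σ (Fin.castLE hrn i)) - M (τ (Fin.castLE hrm i)))))
  - (∑ k : Fin (n - r), (P k + 1) *
      (N (σ ⟨r + k, by have := k.isLt; omega⟩) - N (Fin.castLE (Nat.sub_le n r) k)))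
  - (∑ k : Fin (m - r), Q k *
      (M (τ ⟨r + k, by have := k.isLt; omega⟩) - M (Fin.castLE (Nat.sub_le m r) k)))

/-! The rows `i` (0-indexed) with `λ_{i+1} - (i+1) ≤ m - n` are exactly those with `i ≥ n - r`;
this is part (b). Part (a) follows by testing row `i = j + n - m` of the Young diagram, since
`i < λ'_{j+1} ↔ j + 1 ≤ λ_{i+1}`. -/

theorem IsPtn.lt_conj_iff {lam : ℕ → ℕ} (hlam : IsPtn lam) (i j : ℕ) :
    i < conj lam j ↔ j + 1 ≤ lam i := by
  obtain ⟨hanti, N, hN⟩ := hlam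
  have hlower : IsLowerSet {i | j + 1 ≤ lam i} := fun _ _ hba ha => ha.trans (hanti hba)
  obtain huniv | ⟨k, hk⟩ := hlower.eq_univ_or_Iio
  · have hmem : N ∈ {i | j + 1 ≤ lam i} := huniv ▸ Set.mem_univ N
    simp [hN N le_rfl] at hmem
  · have hconj : conj lam j = k := by
      change Nat.card ({i | j + 1 ≤ lam i} : Set ℕ) = k
      rw [Nat.card_coe_set_eq, hk, Set.ncard_Iio_nat]
    rw [hconj, ← Set.mem_Iio, ← hk]
    rfl

theorem rAtyp_mem (n m : ℕ) (lam : ℕ → ℕ) :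
    n ≤ rAtyp n m lam ∨ m ≤ rAtyp n m lam + lam (n - rAtyp n m lam - 1) :=
  Nat.sInf_mem (s := {t | n ≤ t ∨ m ≤ t + lam (n - t - 1)}) ⟨n, Or.inl le_rfl⟩

section Atypicality

variable {n m : ℕ} {lam : ℕ → ℕ}

theorem lt_rAtyp {t : ℕ} (ht : t < rAtyp n m lam) : t < n ∧ t + lam (n - t - 1) < m := by
  simpa using Nat.notMem_of_lt_sInf ht

theorem sub_rAtyp_le_iff (hanti : Antitone lam) (hpit : lam n ≤ m) (i : ℕ) :
    n - rAtyp n m lam ≤ i ↔ lam i + n ≤ i + m := by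
  have hrn := rAtyp_le_left n m lam
  constructor
  · intro hi
    obtain hni | hin := le_or_gt n i
    · have := hanti hni
      omega
    · have ht : n - 1 - i < rAtyp n m lam := by omega
      have hrow := lt_rAtyp ht
      rw [show n - (n - 1 - i) - 1 = i by omega] at hrow
      omega
  · intro h
    by_contra! hi
    obtain hr | hr := rAtyp_mem n m lam
    · omega
    · have := hanti (show i ≤ n - rAtyp n m lam - 1 by omega)
      omega

end Atypicality

/-- **Lemma (range of nonnegativity and atypicality).** -/
theorem conj_nonneg_iff (n m : ℕ) (lam : ℕ → ℕ) (hlam : IsPtn lam) (hpit : lam n ≤ m) :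
    rAtyp n m lam ≤ min n m ∧
    (∀ j : ℕ, 0 ≤ (conj lam j : ℤ) - ((j : ℤ) + 1) - ((n : ℤ) - m) ↔
      j + 1 ≤ m - rAtyp n m lam) ∧
    (∀ i : ℕ, 0 ≤ ((i : ℤ) + 1) - (lam i : ℤ) - ((n : ℤ) - m) - 1 ↔
      n - rAtyp n m lam < i + 1) := by
  have hrn := rAtyp_le_left n m lam
  refine ⟨le_min hrn (rAtyp_le_right n m lam), fun j => ?_, fun i => ?_⟩
  · have hconj := hlam.lt_conj_iff (j + n - m) j
    have hrow := sub_rAtyp_le_iff hlam.1 hpit (j + n - m)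
    omega
  · have := sub_rAtyp_le_iff hlam.1 hpit i
    omega

end
end

section
/- Let λ be a partition with at most n parts, H > λ_1 + n − 1, and σ ∈ S_n. Decompose the skew diagram (H^n) − λ into ribbons K_1, …, K_n, where K_i is the ribbon added at step σ(i) of the following process: at step k (k = 1,…,n) the particle of the current particle set located at λ_{σ^{-1}(k)} − σ^{-1}(k) jumps to position H − k (initially the particle set is {λ_t − t : t ≥ 1}). Number the boxes of K_i by 1, 2, …, h_i from its bottom-left box to its top-right box. Then for 1 ≤ s ≤ h_i − 1, the box numbered s+1 of K_i is the upper neighbor of the box numbered s if and only if there exists j with j < i, σ(j) > σ(i), and s = λ_j − j − λ_i + i. -/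
open scoped Classical

noncomputable section

/-- The particle set after step `k` of the jump process: particles `λ_t - t` for indices
`t` that have not yet jumped (those with `σ(t) > k`, and all `t > n`), together with the
landed particles `H - 1, …, H - k`. -/
def Pstep (n H : ℕ) (lam : ℕ → ℕ) (σ : Equiv.Perm (Fin n)) (k : ℕ) : Set ℤ :=
  {z | (∃ t : ℕ, z = (lam t : ℤ) - ((t : ℤ) + 1) ∧ ∀ h : t < n, k < (σ ⟨t, h⟩ : ℕ) + 1) ∨
       (∃ j : ℕ, j < k ∧ z = (H : ℤ) - ((j : ℤ) + 1))}

/-- The Young diagram associated with a particle set `P`: the (0-indexed) cell `(i, j)`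
belongs to it iff `P` has at least `i+1` elements `≥ (j+1) - (i+1)`. -/
def diagOf (P : Set ℤ) : Set (ℕ × ℕ) :=
  {p | p.1 + 1 ≤ Nat.card {z : ℤ // z ∈ P ∧ (p.2 : ℤ) - (p.1 : ℤ) ≤ z}}

/-- The ribbon `K_i`, added at step `σ(i)` of the process. -/
def ribbonK (n H : ℕ) (lam : ℕ → ℕ) (σ : Equiv.Perm (Fin n)) (i : Fin n) : Set (ℕ × ℕ) :=
  diagOf (Pstep n H lam σ ((σ i : ℕ) + 1)) \ diagOf (Pstep n H lam σ (σ i : ℕ))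

/-!
Write `F_k(x)` for the number of particles `≥ x` after step `k`; the cell `(a, b)` lies in the
diagram iff `a < F_k(b - a)`. At step `k = σ(i)` the particle at `p = λ_i - i` jumps to
`H - k`, so `F_{k+1} = F_k + 1` on the contents strictly between, and the cell of content `x`
of `K_i` sits in row `F_k(x)`. Two consecutive boxes of contents `c, c + 1` are stacked
vertically iff `F_k(c) = F_k(c + 1) + 1`, i.e. iff `c` is occupied at step `k`. Between `p` and
`H - k` the only occupied positions are the particles `λ_j - j` with `j < i` that have not yet
jumped, i.e. with `σ(j) > σ(i)`.
-/

theorem strictAnti_particle {lam : ℕ → ℕ} (hlam : Antitone lam) :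
    StrictAnti fun t : ℕ => (lam t : ℤ) - ((t : ℤ) + 1) := by
  intro t t' htt'
  have := hlam htt'.le
  dsimp only
  omega

section CountGE

def countGE (P : Set ℤ) (x : ℤ) : ℕ := (P ∩ Set.Ici x).ncard

variable {P : Set ℤ}

theorem mem_diagOf_iff {a b : ℕ} : (a, b) ∈ diagOf P ↔ a + 1 ≤ countGE P (b - a) :=
  Iff.rfl

theorem BddAbove.finite_inter_Ici (hP : BddAbove P) (x : ℤ) : (P ∩ Set.Ici x).Finite :=
  (bddBelow_Ici.mono Set.inter_subset_right).finite_of_bddAbove (hP.mono Set.inter_subset_left)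

theorem countGE_eq_succ_of_mem (hP : BddAbove P) {c : ℤ} (hc : c ∈ P) :
    countGE P c = countGE P (c + 1) + 1 := by
  have hsplit : P ∩ Set.Ici c = insert c (P ∩ Set.Ici (c + 1)) := by
    ext z
    simp only [Set.mem_inter_iff, Set.mem_Ici, Set.mem_insert_iff]
    grind
  rw [countGE, hsplit, Set.ncard_insert_of_notMem (by simp) (hP.finite_inter_Ici _), countGE]

theorem countGE_eq_of_notMem {c : ℤ} (hc : c ∉ P) : countGE P c = countGE P (c + 1) := by
  have hsplit : P ∩ Set.Ici c = P ∩ Set.Ici (c + 1) := by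
    ext z
    simp only [Set.mem_inter_iff, Set.mem_Ici]
    grind
  rw [countGE, hsplit, countGE]

end CountGE

section JumpProcess

variable {n H : ℕ} {lam : ℕ → ℕ} {σ : Equiv.Perm (Fin n)}

theorem Pstep_bddAbove (hlam : Antitone lam) (k : ℕ) : BddAbove (Pstep n H lam σ k) := by
  refine ⟨(lam 0 : ℤ) + H, ?_⟩
  rintro z (⟨t, rfl, -⟩ | ⟨j, -, rfl⟩)
  · have := hlam (Nat.zero_le t)
    omega
  · omega

theorem landing_notMem_Pstep (hlam : Antitone lam) (hH : lam 0 + n ≤ H) {k : ℕ} (hk : k < n) :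
    (H : ℤ) - ((k : ℤ) + 1) ∉ Pstep n H lam σ k := by
  rintro (⟨t, ht, -⟩ | ⟨j, hj, hjk⟩)
  · have := hlam (Nat.zero_le t)
    omega
  · omega

/-- The jump of the particle `λ_i - i` only affects positions `≤ λ_i - i`. -/
theorem Pstep_succ_inter_Ici (i : Fin n) {x : ℤ} (hx₁ : (lam i : ℤ) - ((i : ℤ) + 1) < x)
    (hx₂ : x ≤ (H : ℤ) - ((σ i : ℤ) + 1)) :
    Pstep n H lam σ ((σ i : ℕ) + 1) ∩ Set.Ici x =
      insert ((H : ℤ) - ((σ i : ℤ) + 1)) (Pstep n H lam σ (σ i) ∩ Set.Ici x) := by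
  ext z
  simp only [Pstep, Set.mem_inter_iff, Set.mem_ofPred_eq, Set.mem_Ici, Set.mem_insert_iff]
  constructor
  · rintro ⟨⟨t, rfl, ht⟩ | ⟨j, hj, rfl⟩, hxz⟩
    · exact Or.inr ⟨Or.inl ⟨t, rfl, fun h => (ht h).trans' (Nat.lt_succ_self _)⟩, hxz⟩
    · rcases Nat.lt_succ_iff_lt_or_eq.mp hj with hj | rfl
      · exact Or.inr ⟨Or.inr ⟨j, hj, rfl⟩, hxz⟩
      · exact Or.inl rfl
  · rintro (rfl | ⟨⟨t, rfl, ht⟩ | ⟨j, hj, rfl⟩, hxz⟩)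
    · exact ⟨Or.inr ⟨σ i, Nat.lt_succ_self _, rfl⟩, hx₂⟩
    · refine ⟨Or.inl ⟨t, rfl, fun h => ?_⟩, hxz⟩
      rcases (Nat.lt_succ_iff.mp (ht h)).eq_or_lt with hσ | hσ
      · have hti : t = i := congrArg Fin.val (σ.injective (Fin.ext hσ.symm))
        subst hti
        omega
      · omega
    · exact ⟨Or.inr ⟨j, Nat.lt_succ_of_lt hj, rfl⟩, hxz⟩

theorem countGE_Pstep_succ (hlam : Antitone lam) (hH : lam 0 + n ≤ H) (i : Fin n) {x : ℤ}
    (hx₁ : (lam i : ℤ) - ((i : ℤ) + 1) < x) (hx₂ : x ≤ (H : ℤ) - ((σ i : ℤ) + 1)) :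
    countGE (Pstep n H lam σ ((σ i : ℕ) + 1)) x = countGE (Pstep n H lam σ (σ i)) x + 1 := by
  have hnotMem := landing_notMem_Pstep (σ := σ) hlam hH (σ i).isLt
  rw [countGE, Pstep_succ_inter_Ici i hx₁ hx₂,
    Set.ncard_insert_of_notMem (fun h => hnotMem h.1) ((Pstep_bddAbove hlam _).finite_inter_Ici x),
    countGE]

theorem mem_ribbonK_iff (hlam : Antitone lam) (hH : lam 0 + n ≤ H) (i : Fin n) {a b : ℕ}
    (h₁ : (lam i : ℤ) - ((i : ℤ) + 1) < b - a) (h₂ : (b : ℤ) - a ≤ (H : ℤ) - ((σ i : ℤ) + 1)) :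
    (a, b) ∈ ribbonK n H lam σ i ↔ countGE (Pstep n H lam σ (σ i)) (b - a) = a := by
  rw [ribbonK, Set.mem_sdiff, mem_diagOf_iff, mem_diagOf_iff, countGE_Pstep_succ hlam hH i h₁ h₂]
  omega

theorem mem_Pstep_iff (hlam : Antitone lam) (i : Fin n) {c : ℤ}
    (hc₁ : (lam i : ℤ) - ((i : ℤ) + 1) < c) (hc₂ : c < (H : ℤ) - (σ i : ℤ)) :
    c ∈ Pstep n H lam σ (σ i) ↔
      ∃ j : Fin n, j < i ∧ σ i < σ j ∧ c = (lam j : ℤ) - ((j : ℤ) + 1) := by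
  constructor
  · rintro (⟨t, rfl, ht⟩ | ⟨j, hj, rfl⟩)
    · have hti : t < i := (strictAnti_particle hlam).lt_iff_gt.mp hc₁
      have htn : t < n := hti.trans i.isLt
      have hne : σ ⟨t, htn⟩ ≠ σ i := fun h => hti.ne (congrArg Fin.val (σ.injective h))
      exact ⟨⟨t, htn⟩, hti, lt_of_le_of_ne (Nat.lt_succ_iff.mp (ht htn)) (Ne.symm hne), rfl⟩
    · omega
  · rintro ⟨j, -, hσ, rfl⟩
    exact Or.inl ⟨j, rfl, fun _ => Nat.lt_succ_of_lt hσ⟩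

def particlePos (n H : ℕ) (lam : ℕ → ℕ) (σ : Equiv.Perm (Fin n)) (k : ℕ) (t : Fin n) : ℤ :=
  if (σ t : ℕ) < k then (H : ℤ) - ((σ t : ℤ) + 1) else (lam t : ℤ) - ((t : ℤ) + 1)

theorem particlePos_mem_Pstep (k : ℕ) (t : Fin n) :
    particlePos n H lam σ k t ∈ Pstep n H lam σ k := by
  unfold particlePos
  split_ifs with h
  · exact Or.inr ⟨σ t, h, rfl⟩
  · exact Or.inl ⟨t, rfl, fun _ => by simp only [Fin.eta]; omega⟩

theorem neg_le_particlePos (hH : lam 0 + n ≤ H) (k : ℕ) (t : Fin n) :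
    -((t : ℤ) + 1) ≤ particlePos n H lam σ k t := by
  have := (σ t).isLt
  unfold particlePos
  split_ifs <;> omega

theorem particlePos_injective (hlam : Antitone lam) (hH : lam 0 + n ≤ H) (k : ℕ) :
    Function.Injective (particlePos n H lam σ k) := by
  intro t t' heq
  have := hlam (Nat.zero_le t)
  have := hlam (Nat.zero_le t')
  have := (σ t).isLt
  have := (σ t').isLt
  unfold particlePos at heq
  split_ifs at heq
  · exact σ.injective (Fin.ext (by omega))
  · omega
  · omega
  · exact Fin.ext ((strictAnti_particle hlam).injective heq)

/-- The `m` particles starting in rows `< m` all stay at positions `≥ -m`. -/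
theorem neg_le_countGE_Pstep (hlam : Antitone lam) (hH : lam 0 + n ≤ H) (k : ℕ) {x : ℤ}
    (hx : -(n : ℤ) ≤ x) : -x ≤ countGE (Pstep n H lam σ k) x := by
  rcases le_or_gt 0 x with hx0 | hx0
  · omega
  obtain ⟨m, rfl⟩ : ∃ m : ℕ, x = -m := ⟨(-x).toNat, by omega⟩
  have hm : m ≤ n := by omega
  have hmaps (t : Fin m) :
      particlePos n H lam σ k (Fin.castLE hm t) ∈ Pstep n H lam σ k ∩ Set.Ici (-m) := by
    have hpos := neg_le_particlePos (σ := σ) hH k (Fin.castLE hm t)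
    have := t.isLt
    rw [Fin.val_castLE] at hpos
    exact ⟨particlePos_mem_Pstep k _, by rw [Set.mem_Ici]; omega⟩
  have hcard := Set.ncard_le_ncard_of_injOn (s := Set.univ) _ (fun t _ => hmaps t)
    ((particlePos_injective hlam hH k).comp (Fin.castLE_injective hm)).injOn
    ((Pstep_bddAbove hlam k).finite_inter_Ici _)
  rw [Set.ncard_univ, Nat.card_fin] at hcard
  rw [countGE]
  omega

theorem exists_vertical_step_iff (hlam : Antitone lam) (hH : lam 0 + n ≤ H) (i : Fin n) {c : ℤ}
    (hc₁ : (lam i : ℤ) - ((i : ℤ) + 1) < c) (hc₂ : c + 1 ≤ (H : ℤ) - ((σ i : ℤ) + 1)) :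
    (∃ a b : ℕ, (a + 1, b) ∈ ribbonK n H lam σ i ∧ (a, b) ∈ ribbonK n H lam σ i ∧
        (b : ℤ) - ((a : ℤ) + 1) = c) ↔ c ∈ Pstep n H lam σ (σ i) := by
  constructor
  · rintro ⟨a, b, hlow, hup, rfl⟩
    rw [mem_ribbonK_iff hlam hH i (by push_cast; omega) (by push_cast; omega)] at hlow
    rw [mem_ribbonK_iff hlam hH i (by omega) (by omega)] at hup
    by_contra hnotMem
    have := countGE_eq_of_notMem hnotMem
    push_cast at hlow
    rw [show (b : ℤ) - (a + 1) + 1 = b - a by ring] at this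
    omega
  · intro hc
    have hrow := countGE_eq_succ_of_mem (Pstep_bddAbove hlam _) hc
    have hcol := neg_le_countGE_Pstep (σ := σ) hlam hH (σ i) (x := c + 1) (by omega)
    set a := countGE (Pstep n H lam σ (σ i)) (c + 1)
    obtain ⟨b, hb⟩ : ∃ b : ℕ, (b : ℤ) = a + c + 1 := ⟨(a + c + 1 : ℤ).toNat, by omega⟩
    refine ⟨a, b, ?_, ?_, by omega⟩
    · rw [mem_ribbonK_iff hlam hH i (by push_cast; omega) (by push_cast; omega)]
      rw [show (b : ℤ) - ((a + 1 : ℕ) : ℤ) = c by push_cast; omega]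
      omega
    · rw [mem_ribbonK_iff hlam hH i (by omega) (by omega),
        show (b : ℤ) - (a : ℤ) = c + 1 by omega]

end JumpProcess

theorem ribbon_up_steps_general (n H : ℕ) (lam : ℕ → ℕ) (hlam : IsPtn lam)
    (hH : lam 0 + n ≤ H) (σ : Equiv.Perm (Fin n)) :
    ∀ i : Fin n, ∀ s : ℕ, 1 ≤ s →
      (s : ℤ) ≤ (H : ℤ) - ((σ i : ℕ) + 1) - (lam i : ℤ) + ((i : ℕ) + 1) - 1 →
      ((∃ a b : ℕ, (a + 1, b) ∈ ribbonK n H lam σ i ∧ (a, b) ∈ ribbonK n H lam σ i ∧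
          (b : ℤ) - ((a : ℤ) + 1) = ((lam i : ℤ) - ((i : ℕ) + 1)) + s) ↔
        ∃ j : Fin n, j < i ∧ σ i < σ j ∧
          (s : ℤ) = ((lam j : ℤ) - ((j : ℕ) + 1)) - ((lam i : ℤ) - ((i : ℕ) + 1))) := by
  intro i s hs hsH
  rw [exists_vertical_step_iff hlam.1 hH i (by omega) (by omega),
    mem_Pstep_iff hlam.1 i (by omega) (by omega)]
  refine exists_congr fun j => and_congr_right' (and_congr_right' ?_)
  omega

/-- **Lemma (vertical steps of the ribbons `K_i`).** Numbering the boxes of the ribbon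
`K_i` from its bottom-left box to its top-right box (so that the box numbered `s` is the
unique box of content `λ_i - i + s`), for `1 ≤ s ≤ h_i - 1` the box numbered `s+1` is the
upper neighbor of the box numbered `s` iff there is `j < i` with `σ(j) > σ(i)` and
`s = λ_j - j - λ_i + i`. -/
theorem ribbon_up_steps (n H : ℕ) (lam : ℕ → ℕ) (hlam : IsPtn lam)
    (hlamn : ∀ i, n ≤ i → lam i = 0) (hH : lam 0 + n ≤ H) (σ : Equiv.Perm (Fin n)) :
    ∀ i : Fin n, ∀ s : ℕ, 1 ≤ s →
      (s : ℤ) ≤ (H : ℤ) - ((σ i : ℕ) + 1) - (lam i : ℤ) + ((i : ℕ) + 1) - 1 →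
      ((∃ a b : ℕ, (a + 1, b) ∈ ribbonK n H lam σ i ∧ (a, b) ∈ ribbonK n H lam σ i ∧
          (b : ℤ) - ((a : ℤ) + 1) = ((lam i : ℤ) - ((i : ℕ) + 1)) + s) ↔
        ∃ j : Fin n, j < i ∧ σ i < σ j ∧
          (s : ℤ) = ((lam j : ℤ) - ((j : ℕ) + 1)) - ((lam i : ℤ) - ((i : ℕ) + 1))) :=
  ribbon_up_steps_general n H lam hlam hH σ

end
end
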